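/- arXiv:2404.17689 — 3 statements merged into one kernel-verified Lean document; each statement's English description precedes it below -/
import Mathlib

section
/- Let f : ℝ^n → ℝ ∪ {∞} be a proper, lower semi-continuous function, let p > 0, and let x*, y* ∈ ℝ^n satisfy p‖x* − y*‖₂² + f(x*) ≤ p‖x − y*‖₂² + f(x) for all x ∈ ℝ^n. Then for every q ∈ [0,1] and every x ∈ ℝ^n, (1/2)‖q(x* − y*)‖₂² + (q/(2p)) f(x*) ≤ (1/2)‖x − (q y* + (1−q) x*)‖₂² + (q/(2p)) f(x); in particular x* ∈ prox_{(q/(2p)) f}(q y* + (1−q) x*) for q ∈ (0,1]. -/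
/-!
Write `y_q = q y* + (1 - q) x*`. Expanding both squared distances around `x*` gives
`‖x - y_q‖² - ‖x* - y_q‖² = q (‖x - y*‖² - ‖x* - y*‖²) + (1 - q) ‖x - x*‖²`,
so for `q ≤ 1` the increment of `‖· - y_q‖²` dominates `q` times that of `‖· - y*‖²`.
Both claims then follow from the minimality of `x*`, scaled by `q / (2p)` for the first one,
by adding real numbers to both sides, which is monotone on `EReal`.
-/

theorem EReal.coe_add_le_coe_add_of_sub_le_sub {a b a' b' : ℝ} {F G : EReal}
    (h : (a : EReal) + F ≤ b + G) (hab : b - a ≤ b' - a') : (a' : EReal) + F ≤ b' + G :=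
  calc (a' : EReal) + F = ((a' - a : ℝ) : EReal) + (a + F) := by
        rw [← add_assoc, ← EReal.coe_add, _root_.sub_add_cancel]
    _ ≤ ((a' - a : ℝ) : EReal) + (b + G) := by gcongr
    _ = ((a' - a + b : ℝ) : EReal) + G := by rw [← add_assoc, EReal.coe_add]
    _ ≤ b' + G := by gcongr; linarith

theorem EReal.coe_add_le_coe_add_mul_of_nonneg {a b c : ℝ} {F G : EReal}
    (h : (a : EReal) + F ≤ b + G) (hc : 0 ≤ c) :
    ((c * a : ℝ) : EReal) + c * F ≤ ((c * b : ℝ) : EReal) + c * G := by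
  have hc' : (0 : EReal) ≤ c := EReal.coe_nonneg.mpr hc
  simpa only [EReal.coe_mul, ← EReal.left_distrib_of_nonneg_of_ne_top hc' (EReal.coe_ne_top c)]
    using mul_le_mul_of_nonneg_left h hc'

section

variable {E : Type*} [NormedAddCommGroup E] [InnerProductSpace ℝ E]

theorem norm_sub_smul_add_one_sub_smul_sq (x y z : E) (q : ℝ) :
    ‖x - (q • y + (1 - q) • z)‖ ^ 2 =
      ‖x - z‖ ^ 2 + 2 * q * inner ℝ (x - z) (z - y) + q ^ 2 * ‖z - y‖ ^ 2 := by
  rw [show x - (q • y + (1 - q) • z) = (x - z) + q • (z - y) by module, norm_add_sq_real,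
    real_inner_smul_right, norm_smul, mul_pow, Real.norm_eq_abs, sq_abs]
  ring

theorem mul_sub_norm_sub_sq_le_of_le_one (x y z : E) {q : ℝ} (hq : q ≤ 1) :
    q * (‖x - y‖ ^ 2 - ‖z - y‖ ^ 2) ≤ ‖x - (q • y + (1 - q) • z)‖ ^ 2 - ‖q • (z - y)‖ ^ 2 := by
  rw [show x - y = (x - z) + (z - y) by abel, norm_add_sq_real,
    norm_sub_smul_add_one_sub_smul_sq, norm_smul, mul_pow, Real.norm_eq_abs, sq_abs]
  nlinarith [sq_nonneg ‖x - z‖]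

end

theorem stmt1_general (n : ℕ) (f : EuclideanSpace ℝ (Fin n) → EReal)
    (p : ℝ) (hp : 0 < p) (xs ys : EuclideanSpace ℝ (Fin n))
    (hmin : ∀ x, ((p * ‖xs - ys‖ ^ 2 : ℝ) : EReal) + f xs ≤
      ((p * ‖x - ys‖ ^ 2 : ℝ) : EReal) + f x) :
    (∀ q : ℝ, 0 ≤ q → q ≤ 1 → ∀ x,
      (((1 / 2) * ‖q • (xs - ys)‖ ^ 2 : ℝ) : EReal) + ((q / (2 * p) : ℝ) : EReal) * f xs ≤
        (((1 / 2) * ‖x - (q • ys + (1 - q) • xs)‖ ^ 2 : ℝ) : EReal) +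
          ((q / (2 * p) : ℝ) : EReal) * f x) ∧
    (∀ q : ℝ, 0 < q → q ≤ 1 → ∀ x,
      (((1 / (2 * (q / (2 * p)))) * ‖xs - (q • ys + (1 - q) • xs)‖ ^ 2 : ℝ) : EReal) + f xs ≤
        (((1 / (2 * (q / (2 * p)))) * ‖x - (q • ys + (1 - q) • xs)‖ ^ 2 : ℝ) : EReal) + f x) := by
  constructor
  · intro q hq0 hq1 x
    refine EReal.coe_add_le_coe_add_of_sub_le_sub
      (EReal.coe_add_le_coe_add_mul_of_nonneg (hmin x) (by positivity)) ?_
    have hcoef : q / (2 * p) * p = q / 2 := by field_simp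
    linear_combination (1 / 2) * mul_sub_norm_sub_sq_le_of_le_one x ys xs hq1 +
      (‖x - ys‖ ^ 2 - ‖xs - ys‖ ^ 2) * hcoef
  · intro q hq0 hq1 x
    refine EReal.coe_add_le_coe_add_of_sub_le_sub (hmin x) ?_
    have hcoef : 1 / (2 * (q / (2 * p))) = p / q := by field_simp
    rw [hcoef, show xs - (q • ys + (1 - q) • xs) = q • (xs - ys) by module]
    have key := mul_le_mul_of_nonneg_left (mul_sub_norm_sub_sq_le_of_le_one x ys xs hq1)
      (div_nonneg hp.le hq0.le)
    rw [← mul_assoc, div_mul_cancel₀ p hq0.ne'] at key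
    linarith

/-- Let `f : ℝ^n → ℝ ∪ {∞}` (modeled as an `EReal`-valued function never
taking the value `⊥`) be proper and lower semi-continuous, let `p > 0`, and suppose
`x*, y*` satisfy `p‖x* − y*‖² + f(x*) ≤ p‖x − y*‖² + f(x)` for all `x`.  Then for every
`q ∈ [0,1]` and every `x`,
`(1/2)‖q(x* − y*)‖² + (q/(2p)) f(x*) ≤ (1/2)‖x − (q y* + (1−q) x*)‖² + (q/(2p)) f(x)`;
in particular, for `q ∈ (0,1]`, `x* ∈ prox_{(q/(2p)) f}(q y* + (1−q) x*)`, i.e.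
`(1/(2t))‖x* − y‖² + f(x*) ≤ (1/(2t))‖x − y‖² + f(x)` for all `x`, where `t := q/(2p)`
and `y := q y* + (1−q) x*`. -/
theorem stmt1 (n : ℕ) (f : EuclideanSpace ℝ (Fin n) → EReal)
    (hproper : ∃ x, f x ≠ ⊤) (hnotbot : ∀ x, f x ≠ ⊥)
    (hlsc : LowerSemicontinuous f)
    (p : ℝ) (hp : 0 < p) (xs ys : EuclideanSpace ℝ (Fin n))
    (hmin : ∀ x, ((p * ‖xs - ys‖ ^ 2 : ℝ) : EReal) + f xs ≤
      ((p * ‖x - ys‖ ^ 2 : ℝ) : EReal) + f x) :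
    (∀ q : ℝ, 0 ≤ q → q ≤ 1 → ∀ x,
      (((1 / 2) * ‖q • (xs - ys)‖ ^ 2 : ℝ) : EReal) + ((q / (2 * p) : ℝ) : EReal) * f xs ≤
        (((1 / 2) * ‖x - (q • ys + (1 - q) • xs)‖ ^ 2 : ℝ) : EReal) +
          ((q / (2 * p) : ℝ) : EReal) * f x) ∧
    (∀ q : ℝ, 0 < q → q ≤ 1 → ∀ x,
      (((1 / (2 * (q / (2 * p)))) * ‖xs - (q • ys + (1 - q) • xs)‖ ^ 2 : ℝ) : EReal) + f xs ≤
        (((1 / (2 * (q / (2 * p)))) * ‖x - (q • ys + (1 - q) • xs)‖ ^ 2 : ℝ) : EReal) + f x) :=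
  stmt1_general n f p hp xs ys hmin
end

section
/- Suppose (u*, v*) ∈ ℝ^n × ℝ^m is a global minimizer of F over ℝ^n × ℝ^m. Then for every α ∈ (0,1]: (i) u* ∈ prox_{αγ‖·‖₀}((1−α)u* + α D v*), i.e., (1/(2αγ))‖u* − ((1−α)u* + αDv*)‖₂² + ‖u*‖₀ ≤ (1/(2αγ))‖u − ((1−α)u* + αDv*)‖₂² + ‖u‖₀ for all u ∈ ℝ^n; and (ii) v* is a global minimizer over ℝ^m of v ↦ ψ(Bv) + (λ/(2γ))‖v − Dᵀu*‖₂², i.e., v* = S(Dᵀu*). -/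
/-! With `v = v*` fixed, minimality of `F` in `u` says `u* ∈ prox_{γ‖·‖₀}(Dv*)`. A prox point `x`
of `y` stays a prox point of `(1 − α)x + αy` for the step `αγ`: the two prox inequalities differ by
`(1 − α)/(2αγ) ‖u − x‖² ≥ 0`. With `u = u*` fixed, `DᵀD = I` gives
`‖u* − Dv‖² = ‖v − Dᵀu*‖² + const`, so `v*` solves the problem defining `S(Dᵀu*)`. -/

open Matrix

noncomputable section

/-- Matrix–vector multiplication as a map between Euclidean spaces. -/
def mulVecE {n m : ℕ} (A : Matrix (Fin n) (Fin m) ℝ) (v : EuclideanSpace ℝ (Fin m)) :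
    EuclideanSpace ℝ (Fin n) :=
  (EuclideanSpace.equiv (Fin n) ℝ).symm (A.mulVec ((EuclideanSpace.equiv (Fin m) ℝ) v))

/-- The `ℓ₀` "norm": the number of nonzero components, as a real number. -/
def l0 {n : ℕ} (u : EuclideanSpace ℝ (Fin n)) : ℝ := ({i : Fin n | u i ≠ 0}).ncard

/-- The objective `F(u,v) = ψ(Bv) + (λ/(2γ))‖u − Dv‖₂² + λ‖u‖₀`. -/
def Fobj {n m p : ℕ} (ψ : EuclideanSpace ℝ (Fin p) → ℝ) (B : Matrix (Fin p) (Fin m) ℝ)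
    (D : Matrix (Fin n) (Fin m) ℝ) (lam γ : ℝ) (u : EuclideanSpace ℝ (Fin n))
    (v : EuclideanSpace ℝ (Fin m)) : ℝ :=
  ψ (mulVecE B v) + (lam / (2 * γ)) * ‖u - mulVecE D v‖ ^ 2 + lam * l0 u

section Prox

variable {E : Type*} [NormedAddCommGroup E] [InnerProductSpace ℝ E]

/-- `IsProx g t y x` means `x ∈ prox_{t g}(y)`. -/
def IsProx (g : E → ℝ) (t : ℝ) (y x : E) : Prop :=
  ∀ u, 1 / (2 * t) * ‖x - y‖ ^ 2 + g x ≤ 1 / (2 * t) * ‖u - y‖ ^ 2 + g u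

theorem IsProx.relax {g : E → ℝ} {t α : ℝ} {x y : E} (h : IsProx g t y x) (ht : 0 < t)
    (hα0 : 0 < α) (hα1 : α ≤ 1) : IsProx g (α * t) ((1 - α) • x + α • y) x := by
  intro u
  have hx : x - ((1 - α) • x + α • y) = α • (x - y) := by module
  have hu : u - ((1 - α) • x + α • y) = (u - x) + α • (x - y) := by module
  have hu' : u - y = (u - x) + (x - y) := by abel
  have hold := h u
  rw [hu', norm_add_sq_real] at hold
  rw [hx, hu, norm_add_sq_real, inner_smul_right, norm_smul, Real.norm_of_nonneg hα0.le]
  set I := inner ℝ (u - x) (x - y)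
  have hstep : 1 / (2 * t) * ‖u - x‖ ^ 2 ≤ 1 / (2 * (α * t)) * ‖u - x‖ ^ 2 := by
    gcongr
    nlinarith
  have hold_split : 1 / (2 * t) * (‖u - x‖ ^ 2 + 2 * I + ‖x - y‖ ^ 2)
      = 1 / (2 * t) * ‖u - x‖ ^ 2 + I / t + 1 / (2 * t) * ‖x - y‖ ^ 2 := by
    field_simp
  have hnew_split : 1 / (2 * (α * t)) * (‖u - x‖ ^ 2 + 2 * (α * I) + (α * ‖x - y‖) ^ 2)
      = 1 / (2 * (α * t)) * ‖u - x‖ ^ 2 + I / t + 1 / (2 * (α * t)) * (α * ‖x - y‖) ^ 2 := by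
    field_simp
  linarith

end Prox

theorem norm_sub_sq_eq_of_adjoint_leftInverse {E F : Type*} [NormedAddCommGroup E]
    [InnerProductSpace ℝ E] [NormedAddCommGroup F] [InnerProductSpace ℝ F] {T : F → E}
    {T' : E → F} (hadj : ∀ u v, inner ℝ u (T v) = inner ℝ (T' u) v) (hinv : ∀ v, T' (T v) = v)
    (u : E) (v : F) : ‖u - T v‖ ^ 2 = ‖v - T' u‖ ^ 2 + (‖u‖ ^ 2 - ‖T' u‖ ^ 2) := by
  have hT : ‖T v‖ ^ 2 = ‖v‖ ^ 2 := by
    rw [← real_inner_self_eq_norm_sq, ← real_inner_self_eq_norm_sq, hadj, hinv]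
  rw [norm_sub_sq_real, norm_sub_sq_real, hT, hadj, real_inner_comm v]
  ring

section Matrix

variable {n m : ℕ}

theorem inner_mulVecE (D : Matrix (Fin n) (Fin m) ℝ) (u : EuclideanSpace ℝ (Fin n))
    (v : EuclideanSpace ℝ (Fin m)) : inner ℝ u (mulVecE D v) = inner ℝ (mulVecE Dᵀ u) v := by
  rw [← conjTranspose_eq_transpose_of_trivial]
  change _ = inner ℝ (Dᴴ.toEuclideanLin u) v
  rw [toEuclideanLin_conjTranspose_eq_adjoint, LinearMap.adjoint_inner_left]
  rfl

theorem mulVecE_mulVecE {k : ℕ} (A : Matrix (Fin n) (Fin m) ℝ) (C : Matrix (Fin m) (Fin k) ℝ)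
    (v : EuclideanSpace ℝ (Fin k)) : mulVecE A (mulVecE C v) = mulVecE (A * C) v :=
  congrArg (WithLp.toLp 2) (mulVec_mulVec _ A C)

@[simp]
theorem mulVecE_one (v : EuclideanSpace ℝ (Fin n)) : mulVecE 1 v = v := by
  simp [mulVecE]

end Matrix

section Objective

variable {n m p : ℕ} {ψ : EuclideanSpace ℝ (Fin p) → ℝ} {B : Matrix (Fin p) (Fin m) ℝ}
  {D : Matrix (Fin n) (Fin m) ℝ} {lam γ : ℝ}

theorem Fobj_eq_add (hD : Dᵀ * D = 1) (u : EuclideanSpace ℝ (Fin n))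
    (v : EuclideanSpace ℝ (Fin m)) :
    Fobj ψ B D lam γ u v = (ψ (mulVecE B v) + lam / (2 * γ) * ‖v - mulVecE Dᵀ u‖ ^ 2)
      + (lam / (2 * γ) * (‖u‖ ^ 2 - ‖mulVecE Dᵀ u‖ ^ 2) + lam * l0 u) := by
  have hinv (w : EuclideanSpace ℝ (Fin m)) : mulVecE Dᵀ (mulVecE D w) = w := by
    rw [mulVecE_mulVecE, hD, mulVecE_one]
  rw [Fobj, norm_sub_sq_eq_of_adjoint_leftInverse (inner_mulVecE D) hinv]
  ring

theorem isProx_l0_of_forall_Fobj_le (hlam : 0 < lam) {us : EuclideanSpace ℝ (Fin n)}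
    {vs : EuclideanSpace ℝ (Fin m)} (hmin : ∀ u, Fobj ψ B D lam γ us vs ≤ Fobj ψ B D lam γ u vs) :
    IsProx l0 γ (mulVecE D vs) us := by
  intro u
  have hscale (x : EuclideanSpace ℝ (Fin n)) :
      Fobj ψ B D lam γ x vs = ψ (mulVecE B vs)
        + lam * (1 / (2 * γ) * ‖x - mulVecE D vs‖ ^ 2 + l0 x) := by
    rw [Fobj]; ring
  have h := hmin u
  rw [hscale, hscale, add_le_add_iff_left] at h
  exact le_of_mul_le_mul_left h hlam

end Objective

theorem stmt3_general (n m p : ℕ) (ψ : EuclideanSpace ℝ (Fin p) → ℝ)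
    (B : Matrix (Fin p) (Fin m) ℝ) (D : Matrix (Fin n) (Fin m) ℝ) (hD : Dᵀ * D = 1)
    (lam γ : ℝ) (hlam : 0 < lam) (hγ : 0 < γ)
    (S : EuclideanSpace ℝ (Fin m) → EuclideanSpace ℝ (Fin m))
    (hSuniq : ∀ x v, (∀ w, ψ (mulVecE B v) + (lam / (2 * γ)) * ‖v - x‖ ^ 2 ≤
      ψ (mulVecE B w) + (lam / (2 * γ)) * ‖w - x‖ ^ 2) → v = S x)
    (us : EuclideanSpace ℝ (Fin n)) (vs : EuclideanSpace ℝ (Fin m))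
    (hmin : ∀ u v, Fobj ψ B D lam γ us vs ≤ Fobj ψ B D lam γ u v)
    (α : ℝ) (hα0 : 0 < α) (hα1 : α ≤ 1) :
    (∀ u : EuclideanSpace ℝ (Fin n),
      (1 / (2 * (α * γ))) * ‖us - ((1 - α) • us + α • mulVecE D vs)‖ ^ 2 + l0 us ≤
        (1 / (2 * (α * γ))) * ‖u - ((1 - α) • us + α • mulVecE D vs)‖ ^ 2 + l0 u) ∧
    vs = S (mulVecE Dᵀ us) := by
  refine ⟨(isProx_l0_of_forall_Fobj_le hlam fun u => hmin u vs).relax hγ hα0 hα1, ?_⟩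
  refine hSuniq _ _ fun w => ?_
  have h := hmin us w
  rwa [Fobj_eq_add hD, Fobj_eq_add hD, add_le_add_iff_right] at h

/-- If `(u*, v*)` is a global minimizer of `F`, then for every `α ∈ (0,1]`:
(i) `u* ∈ prox_{αγ‖·‖₀}((1−α)u* + αDv*)`, and (ii) `v* = S(Dᵀu*)`, where `S(x)` is the
unique global minimizer of `v ↦ ψ(Bv) + (λ/(2γ))‖v − x‖₂²`. -/
theorem stmt3 (n m p : ℕ) (ψ : EuclideanSpace ℝ (Fin p) → ℝ)
    (hconv : ConvexOn ℝ Set.univ ψ) (hdiff : ContDiff ℝ 1 ψ)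
    (hbdd : BddBelow (Set.range ψ))
    (B : Matrix (Fin p) (Fin m) ℝ) (D : Matrix (Fin n) (Fin m) ℝ) (hD : Dᵀ * D = 1)
    (lam γ : ℝ) (hlam : 0 < lam) (hγ : 0 < γ)
    (S : EuclideanSpace ℝ (Fin m) → EuclideanSpace ℝ (Fin m))
    (hS : ∀ x v, ψ (mulVecE B (S x)) + (lam / (2 * γ)) * ‖S x - x‖ ^ 2 ≤
      ψ (mulVecE B v) + (lam / (2 * γ)) * ‖v - x‖ ^ 2)
    (hSuniq : ∀ x v, (∀ w, ψ (mulVecE B v) + (lam / (2 * γ)) * ‖v - x‖ ^ 2 ≤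
      ψ (mulVecE B w) + (lam / (2 * γ)) * ‖w - x‖ ^ 2) → v = S x)
    (us : EuclideanSpace ℝ (Fin n)) (vs : EuclideanSpace ℝ (Fin m))
    (hmin : ∀ u v, Fobj ψ B D lam γ us vs ≤ Fobj ψ B D lam γ u v)
    (α : ℝ) (hα0 : 0 < α) (hα1 : α ≤ 1) :
    (∀ u : EuclideanSpace ℝ (Fin n),
      (1 / (2 * (α * γ))) * ‖us - ((1 - α) • us + α • mulVecE D vs)‖ ^ 2 + l0 us ≤
        (1 / (2 * (α * γ))) * ‖u - ((1 - α) • us + α • mulVecE D vs)‖ ^ 2 + l0 u) ∧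
    vs = S (mulVecE Dᵀ us) :=
  stmt3_general n m p ψ B D hD lam γ hlam hγ S hSuniq us vs hmin α hα0 hα1

end
end

section
/- Let α ∈ (0,1] and C ⊆ {1,…,n}, and define G(u,v) := ψ(Bv) + (λ/(2γ))‖u − Dv‖₂² + δ_C(u), where δ_C(u) = 0 if supp(u) ⊆ C and δ_C(u) = ∞ otherwise. Then (u*, v*) ∈ ℝ^n × ℝ^m is a global minimizer of G if and only if u* is a fixed point of 𝒯, i.e., u* = (1−α)T_C u* + α T_C D S(Dᵀu*), and v* = S(Dᵀu*). -/
/-!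
Write `c = λ/(2γ)`. Because `DᵀD = I`, `‖u - Dv‖² = ‖v - Dᵀu‖² + ‖u‖² - ‖Dᵀu‖²`, so for fixed `u`
the problem in `v` is the proximal problem defining `S(Dᵀu)`; for fixed `v`, the problem in `u`
over `supp u ⊆ C` is solved uniquely by the orthogonal projection `T_C Dv`. A minimizer therefore
satisfies `u* = T_C D v*` and `v* = S(Dᵀu*)`, which for `α ≠ 0` is the fixed-point equation.
Conversely, the proximal objective `ψ ∘ B + c‖· - Dᵀu*‖²` is `2c`-strongly convex, so it exceeds its
minimum by at least `c‖v - v*‖²`; since `T_C D` is a contraction, this gain pays for moving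
`T_C D v` away from `u* = T_C D v*`, which makes `(u*, v*)` a joint minimizer.
-/

open Matrix

noncomputable section

/-- The support of a vector. -/
def supp {n : ℕ} (u : EuclideanSpace ℝ (Fin n)) : Set (Fin n) := {i | u i ≠ 0}

/-- The coordinate projection `T_C` onto an index set `C`. -/
def Tmat {n : ℕ} (C : Set (Fin n)) (u : EuclideanSpace ℝ (Fin n)) :
    EuclideanSpace ℝ (Fin n) :=
  (EuclideanSpace.equiv (Fin n) ℝ).symm (C.indicator (fun i => u i))

open Set Filter Topology RealInnerProductSpace

section Convex

variable {E : Type*} [NormedAddCommGroup E] [InnerProductSpace ℝ E]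

theorem StrongConvexOn.add_mul_sq_norm_sub_le_of_isMinOn {S : Set E} {m : ℝ} {f : E → ℝ}
    (hf : StrongConvexOn S m f) {x y : E} (hx : x ∈ S) (hy : y ∈ S) (hmin : IsMinOn f S x) :
    f x + m / 2 * ‖y - x‖ ^ 2 ≤ f y := by
  have hinterp : ∀ t ∈ Ioo (0 : ℝ) 1, f x + (1 - t) * (m / 2 * ‖y - x‖ ^ 2) ≤ f y := by
    rintro t ⟨ht0, ht1⟩
    have hmid : f x ≤ f ((1 - t) • x + t • y) :=
      hmin (hf.1 hx hy (sub_nonneg.2 ht1.le) ht0.le (sub_add_cancel 1 t))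
    have hcvx := hf.2 hx hy (sub_nonneg.2 ht1.le) ht0.le (sub_add_cancel 1 t)
    rw [norm_sub_rev, smul_eq_mul, smul_eq_mul] at hcvx
    refine le_of_mul_le_mul_left ?_ ht0
    linarith
  have hlim : Tendsto (fun t : ℝ => f x + (1 - t) * (m / 2 * ‖y - x‖ ^ 2)) (𝓝[>] 0)
      (𝓝 (f x + (1 - 0) * (m / 2 * ‖y - x‖ ^ 2))) :=
    (Continuous.tendsto (by fun_prop) 0).mono_left nhdsWithin_le_nhds
  rw [sub_zero, one_mul] at hlim
  exact le_of_tendsto hlim (mem_of_superset (Ioo_mem_nhdsGT one_pos) hinterp)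

theorem ConvexOn.strongConvexOn_add_mul_sq_norm_sub {S : Set E} {f : E → ℝ}
    (hf : ConvexOn ℝ S f) (c : ℝ) (x : E) :
    StrongConvexOn S (2 * c) (fun v => f v + c * ‖v - x‖ ^ 2) := by
  rw [strongConvexOn_iff_convex]
  have hlin : ConvexOn ℝ S fun v => (-(2 * c)) * ⟪x, v⟫ + c * ‖x‖ ^ 2 :=
    (((-(2 * c)) • innerₛₗ ℝ x).convexOn hf.1).add_const _
  refine (hf.add hlin).congr fun v _ => ?_
  simp only [Pi.add_apply, norm_sub_sq_real, real_inner_comm x v]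
  ring

end Convex

section mulVecE

variable {n m : ℕ} (A : Matrix (Fin n) (Fin m) ℝ)

theorem mulVecE_eq_toEuclideanLin (v : EuclideanSpace ℝ (Fin m)) :
    mulVecE A v = A.toEuclideanLin v := rfl

theorem mulVecE_sub (v w : EuclideanSpace ℝ (Fin m)) :
    mulVecE A (v - w) = mulVecE A v - mulVecE A w :=
  map_sub A.toEuclideanLin v w

theorem inner_mulVecE_left (v : EuclideanSpace ℝ (Fin m)) (u : EuclideanSpace ℝ (Fin n)) :
    ⟪mulVecE A v, u⟫ = ⟪v, mulVecE Aᵀ u⟫ := by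
  rw [mulVecE_eq_toEuclideanLin, mulVecE_eq_toEuclideanLin,
    ← conjTranspose_eq_transpose_of_trivial, Matrix.toEuclideanLin_conjTranspose_eq_adjoint,
    LinearMap.adjoint_inner_right]

variable {A}

theorem mulVecE_transpose_mulVecE (hA : Aᵀ * A = 1) (v : EuclideanSpace ℝ (Fin m)) :
    mulVecE Aᵀ (mulVecE A v) = v := by
  ext i
  change (Aᵀ *ᵥ (A *ᵥ v.ofLp)) i = v i
  rw [mulVec_mulVec, hA, one_mulVec]

theorem norm_mulVecE (hA : Aᵀ * A = 1) (v : EuclideanSpace ℝ (Fin m)) :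
    ‖mulVecE A v‖ = ‖v‖ := by
  rw [norm_eq_sqrt_real_inner, norm_eq_sqrt_real_inner, inner_mulVecE_left,
    mulVecE_transpose_mulVecE hA]

theorem norm_sub_mulVecE_sq (hA : Aᵀ * A = 1) (u : EuclideanSpace ℝ (Fin n))
    (v : EuclideanSpace ℝ (Fin m)) :
    ‖u - mulVecE A v‖ ^ 2 = ‖v - mulVecE Aᵀ u‖ ^ 2 + (‖u‖ ^ 2 - ‖mulVecE Aᵀ u‖ ^ 2) := by
  rw [norm_sub_sq_real, norm_sub_sq_real, norm_mulVecE hA, real_inner_comm,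
    inner_mulVecE_left]
  ring

end mulVecE

section Tmat

variable {n : ℕ} {C : Set (Fin n)}

theorem Tmat_apply_of_mem (u : EuclideanSpace ℝ (Fin n)) {i : Fin n} (hi : i ∈ C) :
    Tmat C u i = u i :=
  indicator_of_mem hi _

theorem Tmat_apply_of_notMem (u : EuclideanSpace ℝ (Fin n)) {i : Fin n} (hi : i ∉ C) :
    Tmat C u i = 0 :=
  indicator_of_notMem hi _

theorem apply_eq_zero_of_supp_subset {u : EuclideanSpace ℝ (Fin n)} (hu : supp u ⊆ C) {i : Fin n}
    (hi : i ∉ C) : u i = 0 :=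
  not_not.1 (mt (@hu i) hi)

theorem supp_Tmat_subset (y : EuclideanSpace ℝ (Fin n)) : supp (Tmat C y) ⊆ C :=
  fun _ hi => by_contra fun h => hi (Tmat_apply_of_notMem y h)

theorem Tmat_eq_self_of_supp_subset {u : EuclideanSpace ℝ (Fin n)} (hu : supp u ⊆ C) :
    Tmat C u = u := by
  ext i
  by_cases hi : i ∈ C
  · exact Tmat_apply_of_mem u hi
  · rw [Tmat_apply_of_notMem u hi, apply_eq_zero_of_supp_subset hu hi]

theorem Tmat_sub (y z : EuclideanSpace ℝ (Fin n)) :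
    Tmat C (y - z) = Tmat C y - Tmat C z := by
  ext i
  by_cases hi : i ∈ C
  · simp only [PiLp.sub_apply, Tmat_apply_of_mem _ hi]
  · simp only [PiLp.sub_apply, Tmat_apply_of_notMem _ hi, sub_zero]

theorem norm_sub_sq_eq_norm_sub_Tmat_sq_add {u : EuclideanSpace ℝ (Fin n)} (hu : supp u ⊆ C)
    (y : EuclideanSpace ℝ (Fin n)) :
    ‖u - y‖ ^ 2 = ‖u - Tmat C y‖ ^ 2 + ‖Tmat C y - y‖ ^ 2 := by
  simp only [EuclideanSpace.norm_sq_eq, ← Finset.sum_add_distrib]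
  refine Finset.sum_congr rfl fun i _ => ?_
  by_cases hi : i ∈ C
  · simp [Tmat_apply_of_mem _ hi]
  · simp [Tmat_apply_of_notMem _ hi, apply_eq_zero_of_supp_subset hu hi]

theorem norm_Tmat_sq_le (y : EuclideanSpace ℝ (Fin n)) : ‖Tmat C y‖ ^ 2 ≤ ‖y‖ ^ 2 := by
  have h := norm_sub_sq_eq_norm_sub_Tmat_sq_add (C := C) (u := 0) (by simp [supp]) y
  rw [zero_sub, zero_sub, norm_neg, norm_neg] at h
  linarith [sq_nonneg ‖Tmat C y - y‖]

theorem eq_smul_Tmat_add_smul_Tmat_iff {α : ℝ} (hα : α ≠ 0) (u z : EuclideanSpace ℝ (Fin n)) :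
    u = (1 - α) • Tmat C u + α • Tmat C z ↔ u = Tmat C z := by
  constructor
  · intro h
    have hu : supp u ⊆ C := fun i hi => by_contra fun hiC => hi <| by
      rw [h]; simp [Tmat_apply_of_notMem _ hiC]
    rw [Tmat_eq_self_of_supp_subset hu] at h
    refine smul_right_injective _ hα ?_
    linear_combination (norm := module) h
  · intro h
    rw [Tmat_eq_self_of_supp_subset (h ▸ supp_Tmat_subset z), ← h]
    module

theorem eq_Tmat_of_norm_sub_sq_le {u y : EuclideanSpace ℝ (Fin n)} (hu : supp u ⊆ C)
    (h : ‖u - y‖ ^ 2 ≤ ‖Tmat C y - y‖ ^ 2) : u = Tmat C y := by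
  have h0 : ‖u - Tmat C y‖ ^ 2 = 0 := by
    have := norm_sub_sq_eq_norm_sub_Tmat_sq_add hu y
    linarith [sq_nonneg ‖u - Tmat C y‖]
  rwa [sq_eq_zero_iff, norm_eq_zero, sub_eq_zero] at h0

end Tmat

theorem add_mul_sq_norm_sub_mulVecE_le_of_eq_Tmat {n m : ℕ} {f : EuclideanSpace ℝ (Fin m) → ℝ} (hf : ConvexOn ℝ univ f)
    {D : Matrix (Fin n) (Fin m) ℝ} (hD : Dᵀ * D = 1) {c : ℝ} (hc : 0 ≤ c) {C : Set (Fin n)}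
    {us : EuclideanSpace ℝ (Fin n)} {vs : EuclideanSpace ℝ (Fin m)}
    (hvs : ∀ w, f vs + c * ‖vs - mulVecE Dᵀ us‖ ^ 2 ≤ f w + c * ‖w - mulVecE Dᵀ us‖ ^ 2)
    (hus : us = Tmat C (mulVecE D vs)) {u : EuclideanSpace ℝ (Fin n)} (hu : supp u ⊆ C)
    (v : EuclideanSpace ℝ (Fin m)) :
    f vs + c * ‖us - mulVecE D vs‖ ^ 2 ≤ f v + c * ‖u - mulVecE D v‖ ^ 2 := by
  set x := mulVecE Dᵀ us
  have hgrowth : f vs + c * ‖vs - x‖ ^ 2 + c * ‖v - vs‖ ^ 2 ≤ f v + c * ‖v - x‖ ^ 2 := by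
    have := (hf.strongConvexOn_add_mul_sq_norm_sub c x).add_mul_sq_norm_sub_le_of_isMinOn
      (mem_univ vs) (mem_univ v) fun w _ => hvs w
    linarith
  have hcontract : ‖us - Tmat C (mulVecE D v)‖ ^ 2 ≤ ‖v - vs‖ ^ 2 := by
    rw [hus, ← Tmat_sub, ← mulVecE_sub, norm_sub_rev v, ← norm_mulVecE hD (vs - v)]
    exact norm_Tmat_sq_le _
  have hus_split := norm_sub_sq_eq_norm_sub_Tmat_sq_add (hus ▸ supp_Tmat_subset _) (mulVecE D v)
  have hu_split := norm_sub_sq_eq_norm_sub_Tmat_sq_add hu (mulVecE D v)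
  calc f vs + c * ‖us - mulVecE D vs‖ ^ 2
      = f vs + c * ‖vs - x‖ ^ 2 + c * (‖us - mulVecE D v‖ ^ 2 - ‖v - x‖ ^ 2) := by
        rw [norm_sub_mulVecE_sq hD us vs, norm_sub_mulVecE_sq hD us v]; ring
    _ ≤ f v + c * (‖us - mulVecE D v‖ ^ 2 - ‖v - vs‖ ^ 2) := by linarith
    _ ≤ f v + c * ‖Tmat C (mulVecE D v) - mulVecE D v‖ ^ 2 := by gcongr; linarith
    _ ≤ f v + c * ‖u - mulVecE D v‖ ^ 2 := by
        rw [hu_split]; gcongr; exact le_add_of_nonneg_left (sq_nonneg _)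

theorem stmt15_general (n m p : ℕ) (ψ : EuclideanSpace ℝ (Fin p) → ℝ)
    (hconv : ConvexOn ℝ Set.univ ψ)
    (B : Matrix (Fin p) (Fin m) ℝ) (D : Matrix (Fin n) (Fin m) ℝ) (hD : Dᵀ * D = 1)
    (lam γ : ℝ) (hlam : 0 < lam) (hγ : 0 < γ)
    (S : EuclideanSpace ℝ (Fin m) → EuclideanSpace ℝ (Fin m))
    (hS : ∀ x v, ψ (mulVecE B (S x)) + (lam / (2 * γ)) * ‖S x - x‖ ^ 2 ≤
      ψ (mulVecE B v) + (lam / (2 * γ)) * ‖v - x‖ ^ 2)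
    (hSuniq : ∀ x v, (∀ w, ψ (mulVecE B v) + (lam / (2 * γ)) * ‖v - x‖ ^ 2 ≤
      ψ (mulVecE B w) + (lam / (2 * γ)) * ‖w - x‖ ^ 2) → v = S x)
    (α : ℝ) (hα0 : 0 < α)
    (C : Set (Fin n)) (us : EuclideanSpace ℝ (Fin n)) (vs : EuclideanSpace ℝ (Fin m)) :
    (supp us ⊆ C ∧ ∀ u v, supp u ⊆ C →
        ψ (mulVecE B vs) + (lam / (2 * γ)) * ‖us - mulVecE D vs‖ ^ 2 ≤
          ψ (mulVecE B v) + (lam / (2 * γ)) * ‖u - mulVecE D v‖ ^ 2) ↔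
      (us = (1 - α) • Tmat C us + α • Tmat C (mulVecE D (S (mulVecE Dᵀ us))) ∧
        vs = S (mulVecE Dᵀ us)) := by
  set c := lam / (2 * γ)
  have hc : 0 < c := by positivity
  set x := mulVecE Dᵀ us
  rw [eq_smul_Tmat_add_smul_Tmat_iff hα0.ne']
  constructor
  · rintro ⟨hsupp, hmin⟩
    have hvs : vs = S x := hSuniq x vs fun w => by
      have := hmin us w hsupp
      rw [norm_sub_mulVecE_sq hD us vs, norm_sub_mulVecE_sq hD us w] at this
      linarith
    refine ⟨?_, hvs⟩
    rw [← hvs]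
    refine eq_Tmat_of_norm_sub_sq_le hsupp (le_of_mul_le_mul_left ?_ hc)
    linarith [hmin (Tmat C (mulVecE D vs)) vs (supp_Tmat_subset _)]
  · rintro ⟨hus, hvs⟩
    rw [← hvs] at hus
    exact ⟨hus ▸ supp_Tmat_subset _, fun u v hu => add_mul_sq_norm_sub_mulVecE_le_of_eq_Tmat
      (hconv.comp_linearMap B.toEuclideanLin) hD hc.le (hvs ▸ hS x) hus hu v⟩

/-- `(u*, v*)` is a global minimizer of
`G(u,v) = ψ(Bv) + (λ/(2γ))‖u − Dv‖₂² + δ_C(u)` — i.e. `supp(u*) ⊆ C` and `(u*,v*)`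
minimizes `ψ(Bv) + (λ/(2γ))‖u − Dv‖₂²` over all `(u,v)` with `supp(u) ⊆ C` — if and only
if `u* = (1−α)T_C u* + α T_C D S(Dᵀu*)` and `v* = S(Dᵀu*)`. -/
theorem stmt15 (n m p : ℕ) (ψ : EuclideanSpace ℝ (Fin p) → ℝ)
    (hconv : ConvexOn ℝ Set.univ ψ) (hdiff : ContDiff ℝ 1 ψ)
    (hbdd : BddBelow (Set.range ψ))
    (B : Matrix (Fin p) (Fin m) ℝ) (D : Matrix (Fin n) (Fin m) ℝ) (hD : Dᵀ * D = 1)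
    (lam γ : ℝ) (hlam : 0 < lam) (hγ : 0 < γ)
    (S : EuclideanSpace ℝ (Fin m) → EuclideanSpace ℝ (Fin m))
    (hS : ∀ x v, ψ (mulVecE B (S x)) + (lam / (2 * γ)) * ‖S x - x‖ ^ 2 ≤
      ψ (mulVecE B v) + (lam / (2 * γ)) * ‖v - x‖ ^ 2)
    (hSuniq : ∀ x v, (∀ w, ψ (mulVecE B v) + (lam / (2 * γ)) * ‖v - x‖ ^ 2 ≤
      ψ (mulVecE B w) + (lam / (2 * γ)) * ‖w - x‖ ^ 2) → v = S x)
    (α : ℝ) (hα0 : 0 < α) (hα1 : α ≤ 1)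
    (C : Set (Fin n)) (us : EuclideanSpace ℝ (Fin n)) (vs : EuclideanSpace ℝ (Fin m)) :
    (supp us ⊆ C ∧ ∀ u v, supp u ⊆ C →
        ψ (mulVecE B vs) + (lam / (2 * γ)) * ‖us - mulVecE D vs‖ ^ 2 ≤
          ψ (mulVecE B v) + (lam / (2 * γ)) * ‖u - mulVecE D v‖ ^ 2) ↔
      (us = (1 - α) • Tmat C us + α • Tmat C (mulVecE D (S (mulVecE Dᵀ us))) ∧
        vs = S (mulVecE Dᵀ us)) :=
  stmt15_general n m p ψ hconv B D hD lam γ hlam hγ S hS hSuniq α hα0 C us vs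

end
end
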